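/- arXiv:2405.20645 — 3 statements merged into one kernel-verified Lean document; each statement's English description precedes it below -/
import Mathlib

section
/- Let J_1, J_2, J_3, J_4 ⊂ [n] be such that J_1 ∩ J_3 = J_1 ∩ J_4 = J_2 ∩ J_4 = ∅, J_2 ⊆ J_1 ∪ J_3, and J_3 ⊆ J_2 ∪ J_4. Then for any positive integer a, the ideal I = m_{J_1}^a ∩ m_{J_2}^a ∩ m_{J_3}^a ∩ m_{J_4}^a in K[x_1,...,x_n] satisfies the non-pure dual exchange property. -/
open MvPolynomial

/-- Total degree of an exponent vector. -/
def expDeg {n : ℕ} (m : Fin n →₀ ℕ) : ℕ := m.sum fun _ e => e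

/-- A monomial ideal: an ideal generated by a set of monomials. -/
def IsMonomialIdeal {n : ℕ} {K : Type*} [Field K]
    (I : Ideal (MvPolynomial (Fin n) K)) : Prop :=
  ∃ A : Set (Fin n →₀ ℕ), I = Ideal.span ((fun m => (monomial m (1 : K))) '' A)

/-- `m` is (the exponent vector of) a minimal monomial generator of `I`. -/
def MinGen {n : ℕ} {K : Type*} [Field K]
    (I : Ideal (MvPolynomial (Fin n) K)) (m : Fin n →₀ ℕ) : Prop :=
  (monomial m (1 : K)) ∈ I ∧
    ∀ m' : Fin n →₀ ℕ, m' ≤ m → m' ≠ m → (monomial m' (1 : K)) ∉ I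

/-- The non-pure dual exchange property. -/
def NPDE {n : ℕ} {K : Type*} [Field K]
    (I : Ideal (MvPolynomial (Fin n) K)) : Prop :=
  ∀ u v : Fin n →₀ ℕ, MinGen I u → MinGen I v → expDeg u ≤ expDeg v →
    ∀ i : Fin n, v i < u i →
      ∃ j : Fin n, u j < v j ∧
        (monomial (v + Finsupp.single i 1 - Finsupp.single j 1) (1 : K)) ∈ I

/-- `I` has linear quotients. -/
def HasLinearQuotients {n : ℕ} {K : Type*} [Field K]
    (I : Ideal (MvPolynomial (Fin n) K)) : Prop :=
  ∃ l : List (Fin n →₀ ℕ), l.Nodup ∧ (∀ m, MinGen I m ↔ m ∈ l) ∧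
    ∀ k : Fin l.length, 0 < (k : ℕ) →
      ∃ V : Set (Fin n),
        Submodule.colon
          (Ideal.span ((fun m => (monomial m (1 : K))) '' {m | m ∈ l.take k}))
          (Ideal.span {monomial (l.get k) (1 : K)})
        = Ideal.span ((fun i => (X i : MvPolynomial (Fin n) K)) '' V)

/-- The monomial prime ideal generated by the variables with index in `J`. -/
noncomputable def mIdeal {n : ℕ} (K : Type*) [Field K] (J : Set (Fin n)) :
    Ideal (MvPolynomial (Fin n) K) :=
  Ideal.span ((fun i => (X i : MvPolynomial (Fin n) K)) '' J)

/-- `I` is weakly polymatroidal with respect to the variable order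
`x_{σ 0} > x_{σ 1} > ⋯`. -/
def WeaklyPolymatroidal {n : ℕ} {K : Type*} [Field K]
    (I : Ideal (MvPolynomial (Fin n) K)) (σ : Equiv.Perm (Fin n)) : Prop :=
  ∀ u v : Fin n →₀ ℕ, MinGen I u → MinGen I v →
    ∀ t : Fin n, (∀ k : Fin n, k < t → u (σ k) = v (σ k)) → v (σ t) < u (σ t) →
      ∃ j : Fin n, t < j ∧ 0 < v (σ j) ∧
        (monomial (v + Finsupp.single (σ t) 1 - Finsupp.single (σ j) 1) (1 : K)) ∈ I

/-- `I` has a `d`-linear (finite free graded) resolution. -/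
def HasLinearResolution {n : ℕ} {K : Type*} [Field K]
    (I : Ideal (MvPolynomial (Fin n) K)) (d : ℕ) : Prop :=
  ∃ (b : ℕ → ℕ) (g : Fin (b 0) → MvPolynomial (Fin n) K)
    (M : ∀ k : ℕ, Matrix (Fin (b k)) (Fin (b (k + 1))) (MvPolynomial (Fin n) K)),
    (∀ i, (g i).IsHomogeneous d) ∧
    Ideal.span (Set.range g) = I ∧
    (∀ k i j, ((M k) i j).IsHomogeneous 1) ∧
    LinearMap.ker (Fintype.linearCombination (MvPolynomial (Fin n) K) g)
      = LinearMap.range (M 0).mulVecLin ∧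
    ∀ k, LinearMap.ker (M k).mulVecLin = LinearMap.range (M (k + 1)).mulVecLin

/-- The ideal generated by the degree-`d` homogeneous elements of `I`. -/
noncomputable def componentIdeal {n : ℕ} {K : Type*} [Field K]
    (I : Ideal (MvPolynomial (Fin n) K)) (d : ℕ) :
    Ideal (MvPolynomial (Fin n) K) :=
  Ideal.span {f | f ∈ I ∧ f.IsHomogeneous d}

/-- `I` is componentwise linear. -/
def ComponentwiseLinear {n : ℕ} {K : Type*} [Field K]
    (I : Ideal (MvPolynomial (Fin n) K)) : Prop :=
  ∀ d : ℕ, HasLinearResolution (componentIdeal I d) d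

/-!
A monomial `x^m` lies in `m_J^a` iff its degree on `J` is at least `a`. The hypotheses make
`J1, J2, J3, J4` a chain, symmetric under reversal: non-neighbours are disjoint,
`J2 = (J1 ∩ J2) ∪ (J2 ∩ J3)` and `J3 = (J2 ∩ J3) ∪ (J3 ∩ J4)`.
Every variable dividing a minimal generator lies in a block on which the generator has degree
exactly `a`. Hence a minimal generator has degree exactly `a` on `J1` and on `J4` and is supported
on the disjoint union `J1 ∪ (J2 ∩ J3) ∪ J4`, so `deg u ≤ deg v` forces the degree of `u` on
`J2 ∩ J3` to be at most that of `v`. The partner `j` of `i` is then found in the block of `i`: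
in `J2 ∩ J3` by this inequality; in `J1` because `u` and `v` have the same degree there, choosing
`j ∈ J1 \ J2` when `v` has degree exactly `a` on `J2` and `i ∉ J2`; in `J4` by symmetry.
-/

section

variable {n : ℕ}

noncomputable def setDeg (J : Set (Fin n)) (m : Fin n →₀ ℕ) : ℕ := ∑ i, J.indicator m i

section setDeg

variable {A B J : Set (Fin n)} {m m' u v : Fin n →₀ ℕ} {i j p : Fin n} {a : ℕ}

lemma setDeg_add (J : Set (Fin n)) (m m' : Fin n →₀ ℕ) :
    setDeg J (m + m') = setDeg J m + setDeg J m' := by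
  simp only [setDeg, Finsupp.coe_add, Set.indicator_add', Pi.add_apply, Finset.sum_add_distrib]

lemma setDeg_mono (h : m ≤ m') : setDeg J m ≤ setDeg J m' :=
  Finset.sum_le_sum fun i _ => Set.indicator_le_indicator (h i)

lemma setDeg_single_of_mem (hp : p ∈ J) : setDeg J (Finsupp.single p 1) = 1 := by
  rw [setDeg, Finset.sum_eq_single p (fun q _ hq => by simp [Ne.symm hq]) (by simp),
    Set.indicator_of_mem hp, Finsupp.single_eq_same]

lemma setDeg_single_of_notMem (hp : p ∉ J) : setDeg J (Finsupp.single p 1) = 0 :=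
  Finset.sum_eq_zero fun q _ => by
    by_cases hq : q = p
    · subst hq; exact Set.indicator_of_notMem hp _
    · simp [Ne.symm hq]

lemma sub_single_add_single (hp : 0 < m p) : m - Finsupp.single p 1 + Finsupp.single p 1 = m :=
  tsub_add_cancel_of_le (Finsupp.single_le_iff.2 hp)

lemma sub_single_ne (hp : 0 < m p) : m - Finsupp.single p 1 ≠ m := fun h => by
  have := DFunLike.congr_fun h p
  simp only [Finsupp.coe_tsub, Pi.sub_apply, Finsupp.single_eq_same] at this
  omega

lemma setDeg_sub_single_add_one (hp : 0 < m p) (hpJ : p ∈ J) :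
    setDeg J (m - Finsupp.single p 1) + 1 = setDeg J m := by
  have h := setDeg_add J (m - Finsupp.single p 1) (Finsupp.single p 1)
  rw [sub_single_add_single hp, setDeg_single_of_mem hpJ] at h
  exact h.symm

lemma setDeg_sub_single_of_notMem (hp : 0 < m p) (hpJ : p ∉ J) :
    setDeg J (m - Finsupp.single p 1) = setDeg J m := by
  have h := setDeg_add J (m - Finsupp.single p 1) (Finsupp.single p 1)
  rw [sub_single_add_single hp, setDeg_single_of_notMem hpJ, add_zero] at h
  exact h.symm

lemma le_setDeg_sub_single (hp : 0 < m p) (h : a ≤ setDeg J m)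
    (hpJ : p ∈ J → a < setDeg J m) : a ≤ setDeg J (m - Finsupp.single p 1) := by
  by_cases hp' : p ∈ J
  · have := setDeg_sub_single_add_one hp hp'
    have := hpJ hp'
    omega
  · rwa [setDeg_sub_single_of_notMem hp hp']

lemma le_setDeg_exchange (hj : 0 < v j) (h : a ≤ setDeg J v)
    (hjJ : j ∈ J → i ∈ J ∨ a < setDeg J v) :
    a ≤ setDeg J (v + Finsupp.single i 1 - Finsupp.single j 1) := by
  have hswap : v + Finsupp.single i 1 - Finsupp.single j 1 =
      v - Finsupp.single j 1 + Finsupp.single i 1 := by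
    rw [add_comm v, add_tsub_assoc_of_le (Finsupp.single_le_iff.2 hj), add_comm]
  rw [hswap, setDeg_add]
  by_cases hi : i ∈ J
  · by_cases hj' : j ∈ J
    · have := setDeg_sub_single_add_one hj hj'
      rw [setDeg_single_of_mem hi]
      omega
    · rw [setDeg_sub_single_of_notMem hj hj']
      omega
  · have := le_setDeg_sub_single hj h fun hj' => (hjJ hj').resolve_left hi
    omega

lemma setDeg_union (h : Disjoint A B) (m : Fin n →₀ ℕ) :
    setDeg (A ∪ B) m = setDeg A m + setDeg B m := by
  simp only [setDeg, Set.indicator_union_of_disjoint h, Finset.sum_add_distrib]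

lemma setDeg_diff_add_inter (A B : Set (Fin n)) (m : Fin n →₀ ℕ) :
    setDeg (A \ B) m + setDeg (A ∩ B) m = setDeg A m := by
  rw [← setDeg_union (Set.disjoint_sdiff_inter), Set.sdiff_union_inter]

lemma exists_pos_of_setDeg_pos (h : 0 < setDeg J m) : ∃ p ∈ J, 0 < m p := by
  obtain ⟨p, -, hp⟩ := Finset.exists_ne_zero_of_sum_ne_zero h.ne'
  obtain ⟨hpJ, hmp⟩ := Set.indicator_apply_ne_zero.1 hp
  exact ⟨p, hpJ, Nat.pos_of_ne_zero hmp⟩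

lemma setDeg_le_setDeg (h : ∀ p ∈ A, 0 < m p → p ∈ B) : setDeg A m ≤ setDeg B m :=
  Finset.sum_le_sum fun p _ => by
    by_cases hpA : p ∈ A
    · rcases (m p).eq_zero_or_pos with hp | hp
      · rw [Set.indicator_of_mem hpA, hp]
        exact Nat.zero_le _
      · rw [Set.indicator_of_mem hpA, Set.indicator_of_mem (h p hpA hp)]
    · simp [hpA]

lemma exists_lt_of_setDeg_le (hi : i ∈ A) (hvu : v i < u i) (h : setDeg A u ≤ setDeg A v) :
    ∃ j ∈ A, u j < v j := by
  by_contra! hle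
  have : setDeg A v < setDeg A u :=
    Finset.sum_lt_sum (fun p _ => Set.indicator_le_indicator' (hle p))
      ⟨i, Finset.mem_univ _, by simpa [Set.indicator_of_mem hi] using hvu⟩
  omega

lemma expDeg_eq_setDeg (h : ∀ p, 0 < m p → p ∈ A) : expDeg m = setDeg A m := by
  rw [expDeg, Finsupp.sum_fintype _ _ fun _ => rfl, setDeg,
    Set.indicator_eq_self.2 fun p hp => h p (Nat.pos_of_ne_zero hp)]

end setDeg

section mIdeal

variable {K : Type*} [Field K]

lemma mIdeal_pow_eq_span (J : Set (Fin n)) (a : ℕ) :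
    mIdeal K J ^ a = Ideal.span ((fun s => monomial s (1 : K)) '' {s | a ≤ setDeg J s}) := by
  induction a with
  | zero =>
    rw [pow_zero, Ideal.one_eq_top, eq_comm, Ideal.eq_top_iff_one]
    exact Ideal.subset_span ⟨0, Nat.zero_le _, rfl⟩
  | succ a ih =>
    rw [pow_succ, ih, mIdeal, Ideal.span_mul_span']
    apply le_antisymm
    · rw [Ideal.span_le]
      rintro _ ⟨_, ⟨s, hs, rfl⟩, _, ⟨i, hi, rfl⟩, rfl⟩
      refine Ideal.subset_span ⟨s + Finsupp.single i 1, ?_, ?_⟩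
      · show a + 1 ≤ _
        rw [setDeg_add, setDeg_single_of_mem hi]
        exact Nat.succ_le_succ hs
      · show _ = monomial s 1 * monomial (Finsupp.single i 1) 1
        rw [monomial_mul, one_mul]
    · rw [Ideal.span_le]
      rintro _ ⟨s, hs, rfl⟩
      obtain ⟨i, hi, hsi⟩ := exists_pos_of_setDeg_pos (a.succ_pos.trans_le hs)
      refine Ideal.subset_span ⟨monomial (s - Finsupp.single i 1) 1,
        ⟨s - Finsupp.single i 1, ?_, rfl⟩, X i, ⟨i, hi, rfl⟩, ?_⟩
      · have := setDeg_sub_single_add_one hsi hi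
        change a + 1 ≤ _ at hs
        show a ≤ _
        omega
      · show _ * monomial (Finsupp.single i 1) 1 = _
        rw [monomial_mul, one_mul, sub_single_add_single hsi]

lemma monomial_mem_mIdeal_pow_iff {J : Set (Fin n)} {a : ℕ} {m : Fin n →₀ ℕ} :
    monomial m (1 : K) ∈ mIdeal K J ^ a ↔ a ≤ setDeg J m := by
  rw [mIdeal_pow_eq_span, mem_ideal_span_monomial_image]
  refine ⟨fun h => ?_, fun h xi hxi => ?_⟩
  · obtain ⟨s, hs, hsm⟩ := h m (by simp)
    exact hs.trans (setDeg_mono hsm)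
  · exact ⟨m, h, (Finset.mem_singleton.1 (support_monomial_subset hxi)).ge⟩

end mIdeal

structure ChainConfig (J1 J2 J3 J4 : Set (Fin n)) : Prop where
  disjoint₁₃ : Disjoint J1 J3
  disjoint₁₄ : Disjoint J1 J4
  disjoint₂₄ : Disjoint J2 J4
  subset₂ : J2 ⊆ J1 ∪ J3
  subset₃ : J3 ⊆ J2 ∪ J4

namespace ChainConfig

variable {J1 J2 J3 J4 : Set (Fin n)}

lemma symm (hJ : ChainConfig J1 J2 J3 J4) : ChainConfig J4 J3 J2 J1 where
  disjoint₁₃ := hJ.disjoint₂₄.symm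
  disjoint₁₄ := hJ.disjoint₁₄.symm
  disjoint₂₄ := hJ.disjoint₁₃.symm
  subset₂ := Set.union_comm J2 J4 ▸ hJ.subset₃
  subset₃ := Set.union_comm J1 J3 ▸ hJ.subset₂

lemma setDeg₂_eq (hJ : ChainConfig J1 J2 J3 J4) (m : Fin n →₀ ℕ) :
    setDeg J2 m = setDeg (J1 ∩ J2) m + setDeg (J2 ∩ J3) m := by
  have hsplit : J2 = J1 ∩ J2 ∪ J2 ∩ J3 := by
    ext p
    constructor
    · intro hp
      rcases hJ.subset₂ hp with h1 | h3
      exacts [Or.inl ⟨h1, hp⟩, Or.inr ⟨hp, h3⟩]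
    · rintro (⟨-, hp⟩ | ⟨hp, -⟩) <;> exact hp
  conv_lhs => rw [hsplit]
  exact setDeg_union (hJ.disjoint₁₃.mono Set.inter_subset_left Set.inter_subset_right) m

end ChainConfig

noncomputable def interPowIdeal (K : Type*) [Field K] (a : ℕ) (J1 J2 J3 J4 : Set (Fin n)) :
    Ideal (MvPolynomial (Fin n) K) :=
  mIdeal K J1 ^ a ⊓ mIdeal K J2 ^ a ⊓ mIdeal K J3 ^ a ⊓ mIdeal K J4 ^ a

section interPowIdeal

variable {K : Type*} [Field K] {a : ℕ} {J1 J2 J3 J4 : Set (Fin n)} {m u v : Fin n →₀ ℕ}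
  {i j p : Fin n}

lemma interPowIdeal_rev : interPowIdeal K a J4 J3 J2 J1 = interPowIdeal K a J1 J2 J3 J4 := by
  simp only [interPowIdeal]
  ac_rfl

lemma monomial_mem_interPowIdeal_iff :
    monomial m (1 : K) ∈ interPowIdeal K a J1 J2 J3 J4 ↔
      a ≤ setDeg J1 m ∧ a ≤ setDeg J2 m ∧ a ≤ setDeg J3 m ∧ a ≤ setDeg J4 m := by
  simp only [interPowIdeal, Submodule.mem_inf, monomial_mem_mIdeal_pow_iff, and_assoc]

lemma exchange_mem (hv : monomial v (1 : K) ∈ interPowIdeal K a J1 J2 J3 J4) (hj : 0 < v j)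
    (h1 : j ∈ J1 → i ∈ J1 ∨ a < setDeg J1 v) (h2 : j ∈ J2 → i ∈ J2 ∨ a < setDeg J2 v)
    (h3 : j ∈ J3 → i ∈ J3 ∨ a < setDeg J3 v) (h4 : j ∈ J4 → i ∈ J4 ∨ a < setDeg J4 v) :
    monomial (v + Finsupp.single i 1 - Finsupp.single j 1) (1 : K) ∈
      interPowIdeal K a J1 J2 J3 J4 := by
  obtain ⟨hv1, hv2, hv3, hv4⟩ := monomial_mem_interPowIdeal_iff.1 hv
  exact monomial_mem_interPowIdeal_iff.2 ⟨le_setDeg_exchange hj hv1 h1,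
    le_setDeg_exchange hj hv2 h2, le_setDeg_exchange hj hv3 h3, le_setDeg_exchange hj hv4 h4⟩

lemma MinGen.exists_setDeg_eq_of_pos (hm : MinGen (interPowIdeal K a J1 J2 J3 J4) m)
    (hp : 0 < m p) :
    (p ∈ J1 ∧ setDeg J1 m = a) ∨ (p ∈ J2 ∧ setDeg J2 m = a) ∨
      (p ∈ J3 ∧ setDeg J3 m = a) ∨ (p ∈ J4 ∧ setDeg J4 m = a) := by
  obtain ⟨h1, h2, h3, h4⟩ := monomial_mem_interPowIdeal_iff.1 hm.1
  by_contra! hslack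
  refine hm.2 _ tsub_le_self (sub_single_ne hp) (monomial_mem_interPowIdeal_iff.2
    ⟨le_setDeg_sub_single hp h1 fun hp1 => h1.lt_of_ne' (hslack.1 hp1),
      le_setDeg_sub_single hp h2 fun hp2 => h2.lt_of_ne' (hslack.2.1 hp2),
      le_setDeg_sub_single hp h3 fun hp3 => h3.lt_of_ne' (hslack.2.2.1 hp3),
      le_setDeg_sub_single hp h4 fun hp4 => h4.lt_of_ne' (hslack.2.2.2 hp4)⟩)

lemma MinGen.setDeg₁_eq (hJ : ChainConfig J1 J2 J3 J4)
    (hm : MinGen (interPowIdeal K a J1 J2 J3 J4) m) : setDeg J1 m = a := by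
  have h1 := (monomial_mem_interPowIdeal_iff.1 hm.1).1
  by_contra hne
  have h12 : setDeg J1 m ≤ setDeg J2 m := setDeg_le_setDeg fun p hp1 hp => by
    rcases hm.exists_setDeg_eq_of_pos hp with ⟨-, h⟩ | ⟨h, -⟩ | ⟨h, -⟩ | ⟨h, -⟩
    · exact absurd h hne
    · exact h
    · exact absurd h (Set.disjoint_left.1 hJ.disjoint₁₃ hp1)
    · exact absurd h (Set.disjoint_left.1 hJ.disjoint₁₄ hp1)
  obtain ⟨p, hp1, hp⟩ := exists_pos_of_setDeg_pos (a.zero_le.trans_lt (h1.lt_of_ne' hne))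
  rcases hm.exists_setDeg_eq_of_pos hp with ⟨-, h⟩ | ⟨-, h⟩ | ⟨h, -⟩ | ⟨h, -⟩
  · exact hne h
  · omega
  · exact Set.disjoint_left.1 hJ.disjoint₁₃ hp1 h
  · exact Set.disjoint_left.1 hJ.disjoint₁₄ hp1 h

lemma MinGen.setDeg₄_eq (hJ : ChainConfig J1 J2 J3 J4)
    (hm : MinGen (interPowIdeal K a J1 J2 J3 J4) m) : setDeg J4 m = a := by
  rw [← interPowIdeal_rev] at hm
  exact hm.setDeg₁_eq hJ.symm

lemma MinGen.mem_of_pos (hJ : ChainConfig J1 J2 J3 J4)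
    (hm : MinGen (interPowIdeal K a J1 J2 J3 J4) m) (hp : 0 < m p) :
    p ∈ J1 ∨ p ∈ J2 ∩ J3 ∨ p ∈ J4 := by
  rcases hm.exists_setDeg_eq_of_pos hp with ⟨h, -⟩ | ⟨h, -⟩ | ⟨h, -⟩ | ⟨h, -⟩
  · exact Or.inl h
  · rcases hJ.subset₂ h with h1 | h3
    exacts [Or.inl h1, Or.inr (Or.inl ⟨h, h3⟩)]
  · rcases hJ.subset₃ h with h2 | h4
    exacts [Or.inr (Or.inl ⟨h2, h⟩), Or.inr (Or.inr h4)]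
  · exact Or.inr (Or.inr h)

lemma MinGen.expDeg_eq (hJ : ChainConfig J1 J2 J3 J4)
    (hm : MinGen (interPowIdeal K a J1 J2 J3 J4) m) :
    expDeg m = setDeg J1 m + setDeg (J2 ∩ J3) m + setDeg J4 m := by
  rw [expDeg_eq_setDeg (A := J1 ∪ J2 ∩ J3 ∪ J4)
      fun p hp => by simpa only [Set.mem_union, or_assoc] using hm.mem_of_pos hJ hp,
    setDeg_union, setDeg_union (hJ.disjoint₁₃.mono_right Set.inter_subset_right)]
  exact hJ.disjoint₁₄.union_left (hJ.disjoint₂₄.mono_left Set.inter_subset_left)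

lemma setDeg_inter_le_of_expDeg_le (hJ : ChainConfig J1 J2 J3 J4)
    (hu : MinGen (interPowIdeal K a J1 J2 J3 J4) u)
    (hv : MinGen (interPowIdeal K a J1 J2 J3 J4) v) (hdeg : expDeg u ≤ expDeg v) :
    setDeg (J2 ∩ J3) u ≤ setDeg (J2 ∩ J3) v := by
  have := hu.expDeg_eq hJ
  have := hv.expDeg_eq hJ
  have := hu.setDeg₁_eq hJ
  have := hv.setDeg₁_eq hJ
  have := hu.setDeg₄_eq hJ
  have := hv.setDeg₄_eq hJ
  omega

lemma exists_exchange_of_mem₁ (hJ : ChainConfig J1 J2 J3 J4)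
    (hu : MinGen (interPowIdeal K a J1 J2 J3 J4) u)
    (hv : MinGen (interPowIdeal K a J1 J2 J3 J4) v)
    (hmid : setDeg (J2 ∩ J3) u ≤ setDeg (J2 ∩ J3) v) (hi : i ∈ J1) (hvu : v i < u i) :
    ∃ j, u j < v j ∧ monomial (v + Finsupp.single i 1 - Finsupp.single j 1) (1 : K) ∈
      interPowIdeal K a J1 J2 J3 J4 := by
  have hu1 := hu.setDeg₁_eq hJ
  have hv1 := hv.setDeg₁_eq hJ
  obtain ⟨j, hj1, hj, hj2⟩ : ∃ j ∈ J1, u j < v j ∧ (j ∈ J2 → i ∈ J2 ∨ a < setDeg J2 v) := by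
    by_cases hslack : i ∈ J2 ∨ a < setDeg J2 v
    · obtain ⟨j, hj1, hj⟩ := exists_lt_of_setDeg_le hi hvu (hu1.trans hv1.symm).le
      exact ⟨j, hj1, hj, fun _ => hslack⟩
    · obtain ⟨hi2, hv2⟩ := not_or.1 hslack
      -- On `J2` the degree of `v` is at most that of `u`, while on `J2 ∩ J3` it is at least;
      -- so on `J1 ∩ J2` it is at most, and on `J1 \ J2` at least, that of `u`.
      have hu2 := (monomial_mem_interPowIdeal_iff.1 hu.1).2.1
      have := hJ.setDeg₂_eq u
      have := hJ.setDeg₂_eq v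
      have := setDeg_diff_add_inter J1 J2 u
      have := setDeg_diff_add_inter J1 J2 v
      obtain ⟨j, ⟨hj1, hj2⟩, hj⟩ :=
        exists_lt_of_setDeg_le (A := J1 \ J2) ⟨hi, hi2⟩ hvu (by omega)
      exact ⟨j, hj1, hj, fun h => absurd h hj2⟩
  exact ⟨j, hj, exchange_mem hv.1 (by omega) (fun _ => Or.inl hi) hj2
    (fun h => absurd h (Set.disjoint_left.1 hJ.disjoint₁₃ hj1))
    (fun h => absurd h (Set.disjoint_left.1 hJ.disjoint₁₄ hj1))⟩

lemma exists_exchange_of_mem₂₃ (hJ : ChainConfig J1 J2 J3 J4)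
    (hv : monomial v (1 : K) ∈ interPowIdeal K a J1 J2 J3 J4)
    (hmid : setDeg (J2 ∩ J3) u ≤ setDeg (J2 ∩ J3) v) (hi : i ∈ J2 ∩ J3) (hvu : v i < u i) :
    ∃ j, u j < v j ∧ monomial (v + Finsupp.single i 1 - Finsupp.single j 1) (1 : K) ∈
      interPowIdeal K a J1 J2 J3 J4 := by
  obtain ⟨j, ⟨hj2, hj3⟩, hj⟩ := exists_lt_of_setDeg_le hi hvu hmid
  exact ⟨j, hj, exchange_mem hv (by omega)
    (fun h => absurd hj3 (Set.disjoint_left.1 hJ.disjoint₁₃ h)) (fun _ => Or.inl hi.1)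
    (fun _ => Or.inl hi.2) (fun h => absurd h (Set.disjoint_left.1 hJ.disjoint₂₄ hj2))⟩

end interPowIdeal

end

theorem stmt9_general (K : Type*) [Field K] {n : ℕ} (J1 J2 J3 J4 : Set (Fin n))
    (h13 : J1 ∩ J3 = ∅) (h14 : J1 ∩ J4 = ∅) (h24 : J2 ∩ J4 = ∅)
    (h2sub : J2 ⊆ J1 ∪ J3) (h3sub : J3 ⊆ J2 ∪ J4)
    (a : ℕ) :
    NPDE ((mIdeal K J1) ^ a ⊓ (mIdeal K J2) ^ a ⊓ (mIdeal K J3) ^ a ⊓ (mIdeal K J4) ^ a) := by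
  have hJ : ChainConfig J1 J2 J3 J4 :=
    ⟨Set.disjoint_iff_inter_eq_empty.2 h13, Set.disjoint_iff_inter_eq_empty.2 h14,
      Set.disjoint_iff_inter_eq_empty.2 h24, h2sub, h3sub⟩
  show NPDE (interPowIdeal K a J1 J2 J3 J4)
  intro u v hu hv hdeg i hvu
  have hmid := setDeg_inter_le_of_expDeg_le hJ hu hv hdeg
  rcases hu.mem_of_pos hJ (by omega : 0 < u i) with hi | hi | hi
  · exact exists_exchange_of_mem₁ hJ hu hv hmid hi hvu
  · exact exists_exchange_of_mem₂₃ hJ hv.1 hmid hi hvu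
  · rw [← interPowIdeal_rev] at hu hv ⊢
    rw [Set.inter_comm] at hmid
    exact exists_exchange_of_mem₁ hJ.symm hu hv hmid hi hvu

theorem stmt9 (K : Type*) [Field K] {n : ℕ} (J1 J2 J3 J4 : Set (Fin n))
    (h13 : J1 ∩ J3 = ∅) (h14 : J1 ∩ J4 = ∅) (h24 : J2 ∩ J4 = ∅)
    (h2sub : J2 ⊆ J1 ∪ J3) (h3sub : J3 ⊆ J2 ∪ J4)
    (a : ℕ) (ha : 0 < a) :
    NPDE ((mIdeal K J1) ^ a ⊓ (mIdeal K J2) ^ a ⊓ (mIdeal K J3) ^ a ⊓ (mIdeal K J4) ^ a) :=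
  stmt9_general K J1 J2 J3 J4 h13 h14 h24 h2sub h3sub a
end

section
/- Let I = (x_1,x_2) ∩ (x_2,x_3) ∩ (x_3,x_4) ∩ (x_4,x_5) ∩ (x_5,x_6) in K[x_1,...,x_6], the vertex cover ideal of a path on six vertices with five edges. Then I does not satisfy the non-pure dual exchange property: for u = x_1x_3x_5 and v = x_2x_4x_5 in G(I), deg_{x_1}(v) < deg_{x_1}(u), but x_1x_2x_5 ∉ I and x_1x_4x_5 ∉ I. -/
/-!
A monomial lies in the intersection of the primes `(x_a, x_b)` exactly when its support meets
every edge `{a, b}` of the path, and a monomial of the ideal is a minimal generator as soon as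
removing any single variable from it leaves the ideal. The only variables that `v = x_2 x_4 x_5`
has and `u = x_1 x_3 x_5` lacks are `x_2` and `x_4`, and exchanging either of them for `x_1`
uncovers the edge `{x_2, x_3}`, respectively `{x_3, x_4}`. In Lean `x_k` is indexed by `k - 1 : Fin 6`.
-/

open MvPolynomial

section MonomialIdeals

variable {K : Type*} [Field K] {n : ℕ}

theorem monomial_mem_mIdeal_iff {J : Set (Fin n)} {m : Fin n →₀ ℕ} :
    monomial m (1 : K) ∈ mIdeal K J ↔ ∃ i ∈ J, m i ≠ 0 := by
  classical
  rw [mIdeal, mem_ideal_span_X_image, support_monomial, if_neg one_ne_zero]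
  simp

theorem minGen_iff_forall_sub_single_notMem {I : Ideal (MvPolynomial (Fin n) K)}
    {m : Fin n →₀ ℕ} :
    MinGen I m ↔ monomial m (1 : K) ∈ I ∧
      ∀ i, m i ≠ 0 → monomial (m - Finsupp.single i 1) (1 : K) ∉ I := by
  refine and_congr_right fun _ => ⟨fun h i hi => h _ tsub_le_self ?_, fun h m' hle hne hm' => ?_⟩
  · intro heq
    have := DFunLike.congr_fun heq i
    simp only [Finsupp.tsub_apply, Finsupp.single_eq_same] at this
    omega
  · obtain ⟨i, hi⟩ : ∃ i, m' i < m i := by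
      by_contra! h'
      exact hne (le_antisymm hle h')
    refine h i (by omega) (Ideal.mem_of_dvd _ ?_ hm')
    rw [monomial_dvd_monomial]
    refine ⟨Or.inr fun j => ?_, one_dvd _⟩
    rcases eq_or_ne j i with rfl | hj
    · simp only [Finsupp.tsub_apply, Finsupp.single_eq_same]
      omega
    · simpa [Finsupp.single_apply, hj.symm] using hle j

theorem expDeg_eq_degree (m : Fin n →₀ ℕ) : expDeg m = m.degree := rfl

end MonomialIdeals

theorem stmt13 (K : Type*) [Field K] :
    let I : Ideal (MvPolynomial (Fin 6) K) :=
      mIdeal K {0, 1} ⊓ mIdeal K {1, 2} ⊓ mIdeal K {2, 3} ⊓ mIdeal K {3, 4} ⊓ mIdeal K {4, 5}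
    let u : Fin 6 →₀ ℕ := Finsupp.single 0 1 + Finsupp.single 2 1 + Finsupp.single 4 1
    let v : Fin 6 →₀ ℕ := Finsupp.single 1 1 + Finsupp.single 3 1 + Finsupp.single 4 1
    ¬ NPDE I ∧ MinGen I u ∧ MinGen I v ∧ v 0 < u 0 ∧
    (X 0 * X 1 * X 4 : MvPolynomial (Fin 6) K) ∉ I ∧
    (X 0 * X 3 * X 4 : MvPolynomial (Fin 6) K) ∉ I := by
  intro I u v
  have monomial_mem_I_iff : ∀ m : Fin 6 →₀ ℕ, monomial m (1 : K) ∈ I ↔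
      (m 0 ≠ 0 ∨ m 1 ≠ 0) ∧ (m 1 ≠ 0 ∨ m 2 ≠ 0) ∧ (m 2 ≠ 0 ∨ m 3 ≠ 0) ∧
      (m 3 ≠ 0 ∨ m 4 ≠ 0) ∧ (m 4 ≠ 0 ∨ m 5 ≠ 0) := by
    intro m
    simp only [I, Ideal.mem_inf, monomial_mem_mIdeal_iff, Set.mem_insert_iff,
      Set.mem_singleton_iff, exists_eq_or_imp, exists_eq_left, and_assoc]
  have hu : MinGen I u := by
    rw [minGen_iff_forall_sub_single_notMem, monomial_mem_I_iff]
    refine ⟨by simp [u], fun i => ?_⟩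
    fin_cases i <;> simp [u, monomial_mem_I_iff]
  have hv : MinGen I v := by
    rw [minGen_iff_forall_sub_single_notMem, monomial_mem_I_iff]
    refine ⟨by simp [v], fun i => ?_⟩
    fin_cases i <;> simp [v, monomial_mem_I_iff]
  have hvu : v 0 < u 0 := by simp [u, v]
  refine ⟨fun h => ?_, hu, hv, hvu, ?_, ?_⟩
  · obtain ⟨j, hj, hmem⟩ := h u v hu hv (by simp [expDeg_eq_degree, u, v]) 0 hvu
    fin_cases j <;> simp [u, v, monomial_mem_I_iff] at hj hmem
  · simp [X, monomial_mul, monomial_mem_I_iff]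
  · simp [X, monomial_mul, monomial_mem_I_iff]
end

section
/- Let I = (x_1,x_2,x_3)^2 ∩ (x_3,x_4,x_5)^2 ∩ (x_1,x_5,x_6)^2 in K[x_1,...,x_6]. Then I is not weakly polymatroidal with respect to any total order on the variables x_1,...,x_6. -/
open MvPolynomial

/-!
Write the variables as `x₀, …, x₅` (Lean's `Fin 6` indices). Take the minimal generators
`v = x₀x₂x₄`, `u₁ = x₀x₂²x₅` and `u₂ = x₀x₁x₄²`. For `u = u₁` or `u₂`, no exchange
`xᵢ v / xⱼ` with `vᵢ < uᵢ` lies in `I`. Weak polymatroidality then forces every variable at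
which `u` exceeds `v` to be preceded, in the order, by one at which `v` exceeds `u`. For `u₁`
this puts `x₄` before `x₂`, for `u₂` it puts `x₂` before `x₄`.
-/

open Finsupp

section General

variable {n : ℕ} {K : Type*} [Field K]

theorem minGen_of_forall_sub_single_notMem {I : Ideal (MvPolynomial (Fin n) K)} {m : Fin n →₀ ℕ}
    (hm : monomial m (1 : K) ∈ I)
    (hmin : ∀ i, 0 < m i → monomial (m - single i 1) (1 : K) ∉ I) : MinGen I m := by
  refine ⟨hm, fun m' hle hne hm' => ?_⟩
  obtain ⟨i, hi⟩ : ∃ i, m' i < m i := by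
    by_contra! h
    exact hne (le_antisymm hle h)
  refine hmin i (by omega)
    (Ideal.mem_of_dvd _ (monomial_dvd_monomial.mpr ⟨Or.inr ?_, one_dvd _⟩) hm')
  intro k
  have := hle k
  rcases eq_or_ne i k with rfl | hik
  · simp only [tsub_apply, single_eq_same]
    omega
  · simpa [single_eq_of_ne' hik] using this

theorem mIdeal_sq_eq_span_monomial (J : Set (Fin n)) :
    mIdeal K J ^ 2 = Ideal.span ((fun d => monomial d (1 : K)) ''
      {d | ∃ x ∈ J, ∃ y ∈ J, d = single x 1 + single y 1}) := by
  rw [mIdeal, pow_two, Ideal.span_mul_span']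
  congr 1
  ext p
  constructor
  · rintro ⟨_, ⟨x, hx, rfl⟩, _, ⟨y, hy, rfl⟩, rfl⟩
    exact ⟨_, ⟨x, hx, y, hy, rfl⟩, by simp [X, monomial_mul]⟩
  · rintro ⟨_, ⟨x, hx, y, hy, rfl⟩, rfl⟩
    exact ⟨X x, ⟨x, hx, rfl⟩, X y, ⟨y, hy, rfl⟩, by simp [X, monomial_mul]⟩

theorem monomial_mem_mIdeal_sq_iff (J : Finset (Fin n)) (m : Fin n →₀ ℕ) :
    monomial m (1 : K) ∈ mIdeal K (J : Set (Fin n)) ^ 2 ↔ 2 ≤ ∑ i ∈ J, m i := by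
  classical
  rw [mIdeal_sq_eq_span_monomial, mem_ideal_span_monomial_image, support_monomial, if_neg one_ne_zero]
  simp only [Finset.mem_singleton, forall_eq, Set.mem_ofPred_eq, Finset.mem_coe]
  constructor
  · rintro ⟨_, ⟨x, hx, y, hy, rfl⟩, hle⟩
    calc 2 = ∑ i ∈ J, (single x 1 + single y 1 : Fin n →₀ ℕ) i := by
          simp [Finset.sum_add_distrib, single_apply, hx, hy]
      _ ≤ ∑ i ∈ J, m i := Finset.sum_le_sum fun i _ => hle i
  · intro h
    have hpos : ∀ m' : Fin n →₀ ℕ, 1 ≤ ∑ i ∈ J, m' i → ∃ x ∈ J, single x 1 ≤ m' := by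
      intro m' hm'
      obtain ⟨x, hx, hx0⟩ := Finset.exists_ne_zero_of_sum_ne_zero (by omega : ∑ i ∈ J, m' i ≠ 0)
      exact ⟨x, hx, single_le_iff.mpr (Nat.one_le_iff_ne_zero.mpr hx0)⟩
    obtain ⟨x, hx, hxm⟩ := hpos m (by omega)
    obtain ⟨y, hy, hym⟩ := hpos (m - single x 1) (by
      have : ∑ i ∈ J, m i = ∑ i ∈ J, (m - single x 1 : Fin n →₀ ℕ) i + 1 := by
        conv_lhs => rw [← tsub_add_cancel_of_le hxm]
        simp [Finset.sum_add_distrib, single_apply, hx]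
      omega)
    exact ⟨_, ⟨x, hx, y, hy, rfl⟩, by
      calc single x 1 + single y 1 ≤ single x 1 + (m - single x 1) := by gcongr
        _ = m := add_tsub_cancel_of_le hxm⟩

theorem WeaklyPolymatroidal.exists_lt_of_forall_exchange_notMem
    {I : Ideal (MvPolynomial (Fin n) K)} {σ : Equiv.Perm (Fin n)} (hI : WeaklyPolymatroidal I σ)
    {u v : Fin n →₀ ℕ} (hu : MinGen I u) (hv : MinGen I v)
    (hexch : ∀ i j, v i < u i → j ≠ i → 0 < v j →
      monomial (v + single i 1 - single j 1) (1 : K) ∉ I)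
    {a : Fin n} (ha : v a < u a) : ∃ b, u b < v b ∧ σ.symm b < σ.symm a := by
  classical
  set D := Finset.univ.filter fun k => u (σ k) ≠ v (σ k)
  have haD : σ.symm a ∈ D := by simp [D]; omega
  set t := D.min' ⟨_, haD⟩
  have ht : u (σ t) ≠ v (σ t) := by simpa [D] using D.min'_mem ⟨_, haD⟩
  have hbefore : ∀ k < t, u (σ k) = v (σ k) := fun k hk => by
    by_contra hne
    exact absurd (D.min'_le k (by simpa [D] using hne)) (not_le.mpr hk)
  have hlt : u (σ t) < v (σ t) := by
    refine lt_of_le_of_ne (not_lt.mp fun hvu => ?_) ht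
    obtain ⟨j, htj, hj, hmem⟩ := hI u v hu hv t hbefore hvu
    exact hexch _ _ hvu (σ.injective.ne htj.ne') hj hmem
  refine ⟨σ t, hlt, ?_⟩
  rw [Equiv.symm_apply_apply]
  refine lt_of_le_of_ne (D.min'_le _ haD) fun hta => ?_
  rw [hta, Equiv.apply_symm_apply] at hlt
  omega

end General

noncomputable def triangleIdeal (K : Type*) [Field K] : Ideal (MvPolynomial (Fin 6) K) :=
  (mIdeal K {0, 1, 2}) ^ 2 ⊓ (mIdeal K {2, 3, 4}) ^ 2 ⊓ (mIdeal K {0, 4, 5}) ^ 2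

section Triangle

variable {K : Type*} [Field K]

theorem monomial_mem_triangleIdeal_iff (m : Fin 6 →₀ ℕ) :
    monomial m (1 : K) ∈ triangleIdeal K ↔
      2 ≤ m 0 + m 1 + m 2 ∧ 2 ≤ m 2 + m 3 + m 4 ∧ 2 ≤ m 0 + m 4 + m 5 := by
  have hcoe (a b c : Fin 6) : ({a, b, c} : Set (Fin 6)) = ↑({a, b, c} : Finset (Fin 6)) := by simp
  simp only [triangleIdeal, Ideal.mem_inf, hcoe, monomial_mem_mIdeal_sq_iff]
  simp [Finset.sum_insert, and_assoc, add_assoc]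

noncomputable def v₀ : Fin 6 →₀ ℕ := single 0 1 + single 2 1 + single 4 1
noncomputable def u₁ : Fin 6 →₀ ℕ := single 0 1 + single 2 2 + single 5 1
noncomputable def u₂ : Fin 6 →₀ ℕ := single 0 1 + single 1 1 + single 4 2

theorem minGen_v₀ : MinGen (triangleIdeal K) v₀ := by
  refine minGen_of_forall_sub_single_notMem ?_ fun i hi => ?_ <;>
    simp only [monomial_mem_triangleIdeal_iff]
  · simp [v₀]
  · fin_cases i <;> simp_all [v₀]

theorem minGen_u₁ : MinGen (triangleIdeal K) u₁ := by
  refine minGen_of_forall_sub_single_notMem ?_ fun i hi => ?_ <;>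
    simp only [monomial_mem_triangleIdeal_iff]
  · simp [u₁]
  · fin_cases i <;> simp_all [u₁]

theorem minGen_u₂ : MinGen (triangleIdeal K) u₂ := by
  refine minGen_of_forall_sub_single_notMem ?_ fun i hi => ?_ <;>
    simp only [monomial_mem_triangleIdeal_iff]
  · simp [u₂]
  · fin_cases i <;> simp_all [u₂]

theorem exchange_v₀_u₁_notMem (i j : Fin 6) (hi : v₀ i < u₁ i) (hji : j ≠ i) (hj : 0 < v₀ j) :
    monomial (v₀ + single i 1 - single j 1) (1 : K) ∉ triangleIdeal K := by
  rw [monomial_mem_triangleIdeal_iff]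
  fin_cases i <;> fin_cases j <;> simp_all [v₀, u₁]

theorem exchange_v₀_u₂_notMem (i j : Fin 6) (hi : v₀ i < u₂ i) (hji : j ≠ i) (hj : 0 < v₀ j) :
    monomial (v₀ + single i 1 - single j 1) (1 : K) ∉ triangleIdeal K := by
  rw [monomial_mem_triangleIdeal_iff]
  fin_cases i <;> fin_cases j <;> simp_all [v₀, u₂]

end Triangle

theorem stmt14 (K : Type*) [Field K] :
    ∀ σ : Equiv.Perm (Fin 6),
      ¬ WeaklyPolymatroidal
        ((mIdeal K {0, 1, 2}) ^ 2 ⊓ (mIdeal K {2, 3, 4}) ^ 2 ⊓ (mIdeal K {0, 4, 5}) ^ 2) σ := by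
  intro σ hWP
  change WeaklyPolymatroidal (triangleIdeal K) σ at hWP
  obtain ⟨b, hb, hb2⟩ := hWP.exists_lt_of_forall_exchange_notMem minGen_u₁ minGen_v₀
    exchange_v₀_u₁_notMem (a := 2) (by simp [u₁, v₀])
  obtain ⟨c, hc, hc4⟩ := hWP.exists_lt_of_forall_exchange_notMem minGen_u₂ minGen_v₀
    exchange_v₀_u₂_notMem (a := 4) (by simp [u₂, v₀])
  obtain rfl : b = 4 := by fin_cases b <;> simp_all [u₁, v₀]
  obtain rfl : c = 2 := by fin_cases c <;> simp_all [u₂, v₀]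
  exact lt_asymm hb2 hc4
end
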